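/- For every s ∈ [−1,1], the tail generating function Q_{τ_A}(s) = Σ_{n≥0} q_n s^n satisfies the identity Q_{τ_A}(s) · ( P(A) s^l + (1 − s) Σ_{k=1}^{l} [A_(k) = A^(k)] P(A^(l−k)) s^{l−k} ) = Σ_{k=1}^{l} [A_(k) = A^(k)] P(A^(l−k)) s^{l−k}. -/

import Mathlib

open MeasureTheory ENNReal

noncomputable section

/-- Probability of a single toss outcome: `true` (heads) has probability `p`,
`false` (tails) has probability `1 - p`. -/
def letterP (p : ℝ) (b : Bool) : ℝ := if b then p else 1 - p

/-- Probability of a finite string of tosses (`1` for the empty string). -/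
def strP (p : ℝ) (A : List Bool) : ℝ := (A.map (letterP p)).prod

/-- `μ` is the product measure on `{H,T}^ℕ` of i.i.d. coin tosses with heads
probability `p`: every cylinder set has the product probability. -/
def IsCoinMeasure (p : ℝ) (μ : Measure (ℕ → Bool)) : Prop :=
  ∀ (n : ℕ) (a : Fin n → Bool),
    μ {ξ | ∀ i : Fin n, ξ i = a i} = ENNReal.ofReal (∏ i, letterP p (a i))

/-- The pattern `A` (of length `l`) occurs ending exactly at toss `n`
(toss number `k ≥ 1` of `ξ` is `ξ (k - 1)`): `n ≥ l` and tosses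
`n - l + 1, …, n` spell `A`. -/
def occursAt (A : List Bool) (ξ : ℕ → Bool) (n : ℕ) : Prop :=
  A.length ≤ n ∧ (List.ofFn fun k : Fin A.length => ξ (n - A.length + k)) = A

/-- The first toss at which the pattern `A` has occurred (`⊤` if it never occurs). -/
def hitTime (A : List Bool) (ξ : ℕ → Bool) : ℕ∞ :=
  ⨅ (n : ℕ) (_ : occursAt A ξ n), (n : ℕ∞)

/-- The correlation polynomial
`w_A^B(s) = Σ_{k=1}^{min(|A|,|B|)} [A_(k) = B^(k)] P(A^(|A|-k)) s^(|A|-k)`,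
where `A_(k)` is the prefix of length `k` of `A` and `B^(k)` is the suffix of
length `k` of `B`. -/
def corrW (p : ℝ) (A B : List Bool) (s : ℝ) : ℝ :=
  ∑ k ∈ Finset.Icc 1 (min A.length B.length),
    (if A.take k = B.drop (B.length - k) then (1 : ℝ) else 0) *
      strP p (A.drop k) * s ^ (A.length - k)


/-!
If `A` has not appeared by toss `n` and tosses `n + 1, …, n + l` spell `A`, then `A` first
appears at some toss `n + k` with `1 ≤ k ≤ l`. The two occurrences overlap in `k` letters, so
`A_(k) = A^(k)`, and the tosses after `n + k` spell `A^(l-k)`. By independence of the tosses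
this decomposition becomes the renewal identity
`q_n P(A) = Σ_k [A_(k) = A^(k)] P(A^(l-k)) f_{n+k}`, where `f_m = μ(τ_A = m) = q_{m-1} - q_m`.
Multiplying by `s^(n+l)` and summing over `n` gives `P(A) s^l Q(s) = w(s) F(s)` with
`F(s) = Σ f_m s^m = 1 - (1 - s) Q(s)`, which is the identity. The same decomposition gives
`q_{n+l} ≤ (1 - P(A)) q_n`, so the series converge on `[-1, 1]`.
-/

def window (ξ : ℕ → Bool) (a len : ℕ) : List Bool := List.ofFn fun i : Fin len => ξ (a + i)

def spellsAt (w : List Bool) (a : ℕ) : Set (ℕ → Bool) := {ξ | window ξ a w.length = w}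

section Window

variable {ξ η : ℕ → Bool} {a len : ℕ}

@[simp]
lemma length_window : (window ξ a len).length = len := List.length_ofFn

lemma window_add (x y : ℕ) : window ξ a (x + y) = window ξ a x ++ window ξ (a + x) y := by
  simp only [window, List.ofFn_add, Fin.val_castLE, Fin.val_natAdd, Nat.add_assoc]

lemma window_congr (h : ∀ i < a + len, ξ i = η i) : window ξ a len = window η a len :=
  congrArg List.ofFn <| funext fun i => h _ (by omega)

lemma eq_of_window_zero_eq (h : window ξ 0 len = window η 0 len) : ∀ i < len, ξ i = η i :=
  fun i hi => by simpa using congrFun (List.ofFn_inj.1 h) ⟨i, hi⟩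

lemma window_eq_iff {w : List Bool} :
    window ξ a w.length = w ↔ ∀ i : Fin w.length, ξ (a + i) = w.get i := by
  conv_lhs => rhs; rw [← List.ofFn_get w]
  rw [window, List.ofFn_inj, funext_iff]

lemma mem_spellsAt_window :
    ξ ∈ spellsAt (window η a len) a ↔ window ξ a len = window η a len := by
  simp only [spellsAt, Set.mem_ofPred_eq, length_window]

lemma spellsAt_append (u w : List Bool) :
    spellsAt (u ++ w) a = spellsAt u a ∩ spellsAt w (a + u.length) := by
  ext ξ
  simp only [spellsAt, Set.mem_ofPred_eq, Set.mem_inter_iff, List.length_append, window_add]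
  exact ⟨fun h => List.append_inj h (by simp), fun h => by rw [h.1, h.2]⟩

lemma spellsAt_eq_inter_take_drop (w : List Bool) {k : ℕ} (hk : k ≤ w.length) :
    spellsAt w a = spellsAt (w.take k) a ∩ spellsAt (w.drop k) (a + k) := by
  conv_lhs => rw [← List.take_append_drop k w]
  rw [spellsAt_append, List.length_take_of_le hk]

lemma eq_of_mem_spellsAt {u w : List Bool} (hu : ξ ∈ spellsAt u a) (hw : ξ ∈ spellsAt w a)
    (hlen : u.length = w.length) : u = w := by
  rw [← hu, ← hw, hlen]

lemma pairwiseDisjoint_spellsAt {S : Set (List Bool)} (hS : ∀ u ∈ S, u.length = len) :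
    S.PairwiseDisjoint (spellsAt · a) := fun u hu w hw huw =>
  Set.disjoint_left.2 fun _ h₁ h₂ =>
    huw (eq_of_mem_spellsAt h₁ h₂ ((hS u hu).trans (hS w hw).symm))

lemma measurableSet_spellsAt (w : List Bool) (a : ℕ) : MeasurableSet (spellsAt w a) :=
  show MeasurableSet ((fun (ξ : ℕ → Bool) (i : Fin w.length) => ξ (a + i)) ⁻¹'
      {g | List.ofFn g = w}) from
    (measurable_pi_lambda _ fun _ => measurable_pi_apply _) (Set.toFinite _).measurableSet

lemma eq_biUnion_spellsAt_of_dependsOn {E : Set (ℕ → Bool)}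
    (hE : DependsOn (· ∈ E) (Set.Iio len)) :
    E = ⋃ u ∈ (window · 0 len) '' E, spellsAt u 0 := by
  ext ξ
  simp only [Set.mem_iUnion, Set.mem_image, exists_prop, exists_exists_and_eq_and,
    mem_spellsAt_window]
  refine ⟨fun h => ⟨ξ, h, rfl⟩, fun ⟨η, hη, h⟩ => ?_⟩
  exact (hE fun i hi => eq_of_window_zero_eq h i hi).mpr hη

lemma measurableSet_of_dependsOn {E : Set (ℕ → Bool)}
    (hE : DependsOn (· ∈ E) (Set.Iio len)) :
    MeasurableSet E := by
  rw [eq_biUnion_spellsAt_of_dependsOn hE]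
  exact .biUnion (Set.to_countable _) fun _ _ => measurableSet_spellsAt _ _

end Window

section CoinMeasure

variable {p : ℝ} {μ : Measure (ℕ → Bool)}

lemma letterP_nonneg (hp0 : 0 ≤ p) (hp1 : p ≤ 1) (b : Bool) : 0 ≤ letterP p b := by
  unfold letterP; split <;> linarith

lemma letterP_pos (hp0 : 0 < p) (hp1 : p < 1) (b : Bool) : 0 < letterP p b := by
  unfold letterP; split <;> linarith

lemma strP_nonneg (hp0 : 0 ≤ p) (hp1 : p ≤ 1) (w : List Bool) : 0 ≤ strP p w :=
  List.prod_nonneg fun _ hx => by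
    obtain ⟨b, -, rfl⟩ := List.mem_map.1 hx
    exact letterP_nonneg hp0 hp1 b

lemma strP_pos (hp0 : 0 < p) (hp1 : p < 1) (w : List Bool) : 0 < strP p w :=
  List.prod_pos fun _ hx => by
    obtain ⟨b, -, rfl⟩ := List.mem_map.1 hx
    exact letterP_pos hp0 hp1 b

lemma strP_append (u w : List Bool) : strP p (u ++ w) = strP p u * strP p w := by
  simp only [strP, List.map_append, List.prod_append]

lemma strP_eq_prod_get (w : List Bool) : strP p w = ∏ i, letterP p (w.get i) := by
  conv_lhs => rw [strP, ← List.ofFn_get w, List.map_ofFn, List.prod_ofFn]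
  rfl

lemma IsCoinMeasure.measure_spellsAt_zero (hμ : IsCoinMeasure p μ) (w : List Bool) :
    μ (spellsAt w 0) = ENNReal.ofReal (strP p w) := by
  have : spellsAt w 0 = {ξ | ∀ i : Fin w.length, ξ i = w.get i} := by
    ext; simp [spellsAt, window_eq_iff]
  rw [this, hμ, strP_eq_prod_get]

theorem IsCoinMeasure.measure_inter_spellsAt (hμ : IsCoinMeasure p μ) (hp0 : 0 ≤ p)
    (hp1 : p ≤ 1) {E : Set (ℕ → Bool)} {m : ℕ} (hE : DependsOn (· ∈ E) (Set.Iio m))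
    (w : List Bool) : μ (E ∩ spellsAt w m) = μ E * ENNReal.ofReal (strP p w) := by
  have hE' := eq_biUnion_spellsAt_of_dependsOn hE
  set S := (window · 0 m) '' E
  have hS : ∀ u ∈ S, u.length = m := by rintro _ ⟨η, -, rfl⟩; exact length_window
  have hdisj : S.PairwiseDisjoint (spellsAt · 0) := pairwiseDisjoint_spellsAt hS
  have hcyl : ∀ u ∈ S, spellsAt u 0 ∩ spellsAt w m = spellsAt (u ++ w) 0 := fun u hu => by
    rw [spellsAt_append, zero_add, hS u hu]
  calc μ (E ∩ spellsAt w m) = μ (⋃ u ∈ S, spellsAt u 0 ∩ spellsAt w m) := by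
        rw [← Set.iUnion₂_inter, ← hE']
    _ = ∑' u : S, μ (spellsAt u 0) * ENNReal.ofReal (strP p w) := by
        rw [measure_biUnion S.to_countable (hdisj.mono fun _ => Set.inter_subset_left)
          fun _ _ => (measurableSet_spellsAt _ _).inter (measurableSet_spellsAt _ _)]
        refine tsum_congr fun u => ?_
        rw [hcyl u u.2, hμ.measure_spellsAt_zero, hμ.measure_spellsAt_zero, strP_append,
          ENNReal.ofReal_mul (strP_nonneg hp0 hp1 _)]
    _ = μ E * ENNReal.ofReal (strP p w) := by
        rw [ENNReal.tsum_mul_right, ← measure_biUnion S.to_countable hdisj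
          fun _ _ => measurableSet_spellsAt _ _, ← hE']

lemma IsCoinMeasure.measureReal_inter_spellsAt [IsFiniteMeasure μ] (hμ : IsCoinMeasure p μ)
    (hp0 : 0 ≤ p) (hp1 : p ≤ 1) {E : Set (ℕ → Bool)} {m : ℕ}
    (hE : DependsOn (· ∈ E) (Set.Iio m)) (w : List Bool) :
    μ.real (E ∩ spellsAt w m) = μ.real E * strP p w := by
  rw [measureReal_def, hμ.measure_inter_spellsAt hp0 hp1 hE, ENNReal.toReal_mul,
    ENNReal.toReal_ofReal (strP_nonneg hp0 hp1 w), measureReal_def]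

end CoinMeasure

section HitTime

variable {A : List Bool} {ξ η : ℕ → Bool} {k m n : ℕ}

lemma occursAt_iff_mem_spellsAt :
    occursAt A ξ n ↔ A.length ≤ n ∧ ξ ∈ spellsAt A (n - A.length) := Iff.rfl

lemma occursAt_add_length_iff : occursAt A ξ (n + A.length) ↔ ξ ∈ spellsAt A n := by
  simp [occursAt_iff_mem_spellsAt]

lemma occursAt_congr (h : ∀ i < n, ξ i = η i) : occursAt A ξ n ↔ occursAt A η n := by
  simp only [occursAt_iff_mem_spellsAt, spellsAt, Set.mem_ofPred_eq]
  exact and_congr_right fun hn => by rw [window_congr fun i hi => h i (by omega)]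

lemma mem_spellsAt_drop_of_occursAt (h : occursAt A ξ (n + k)) (hk : k ≤ A.length) :
    ξ ∈ spellsAt (A.drop (A.length - k)) n := by
  have hmem := (occursAt_iff_mem_spellsAt.1 h).2
  rw [spellsAt_eq_inter_take_drop A (k := A.length - k) (by omega)] at hmem
  convert hmem.2 using 2
  have := h.1
  omega

lemma hitTime_le_of_occursAt (h : occursAt A ξ n) : hitTime A ξ ≤ n := iInf₂_le n h

lemma exists_occursAt_hitTime_eq (h : occursAt A ξ m) :
    ∃ t, occursAt A ξ t ∧ hitTime A ξ = t := by
  classical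
  refine ⟨Nat.find ⟨m, h⟩, Nat.find_spec ⟨m, h⟩,
    le_antisymm (hitTime_le_of_occursAt (Nat.find_spec _)) (le_iInf₂ fun j hj => ?_)⟩
  exact_mod_cast Nat.find_min' _ hj

lemma occursAt_of_hitTime_eq (h : hitTime A ξ = n) : occursAt A ξ n := by
  by_cases hex : ∃ m, occursAt A ξ m
  · obtain ⟨m, hm⟩ := hex
    obtain ⟨t, ht, ht'⟩ := exists_occursAt_hitTime_eq hm
    rwa [← ENat.natCast_inj.1 (ht'.symm.trans h)]
  · push Not at hex
    simp [hitTime, hex] at h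

lemma lt_hitTime_iff : (n : ℕ∞) < hitTime A ξ ↔ ∀ m ≤ n, ¬ occursAt A ξ m := by
  refine ⟨fun h m hm hocc => ?_, fun h => ?_⟩
  · exact ((hitTime_le_of_occursAt hocc).trans (by exact_mod_cast hm)).not_gt h
  · by_contra! hle
    obtain ⟨t, ht⟩ := ENat.ne_top_iff_exists.1 (hle.trans_lt (ENat.natCast_lt_top n)).ne
    exact h t (by rw [← ht] at hle; exact_mod_cast hle) (occursAt_of_hitTime_eq ht.symm)

lemma hitTime_eq_iff : hitTime A ξ = n ↔ occursAt A ξ n ∧ ∀ m < n, ¬ occursAt A ξ m := by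
  refine ⟨fun h => ⟨occursAt_of_hitTime_eq h, fun m hm hocc => ?_⟩,
    fun ⟨h₁, h₂⟩ => le_antisymm (hitTime_le_of_occursAt h₁) (le_iInf₂ fun m hm => ?_)⟩
  · have := h ▸ hitTime_le_of_occursAt hocc
    exact absurd (by exact_mod_cast this) hm.not_ge
  · exact_mod_cast not_lt.1 fun hlt => h₂ m hlt hm

lemma length_le_hitTime : (A.length : ℕ∞) ≤ hitTime A ξ :=
  le_iInf₂ fun _ h => by exact_mod_cast h.1

lemma dependsOn_lt_hitTime (A : List Bool) (n : ℕ) :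
    DependsOn (· ∈ {ξ | (n : ℕ∞) < hitTime A ξ}) (Set.Iio n) := fun ξ η h => by
  simp only [Set.mem_ofPred_eq, lt_hitTime_iff]
  exact propext <| forall₂_congr fun m hm =>
    not_congr <| occursAt_congr fun i hi => h i (by simp only [Set.mem_Iio]; omega)

lemma dependsOn_hitTime_eq (A : List Bool) (n : ℕ) :
    DependsOn (· ∈ {ξ | hitTime A ξ = n}) (Set.Iio n) := fun ξ η h => by
  simp only [Set.mem_ofPred_eq, hitTime_eq_iff]
  have hocc : ∀ m ≤ n, (occursAt A ξ m ↔ occursAt A η m) := fun m hm =>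
    occursAt_congr fun i hi => h i (by simp only [Set.mem_Iio]; omega)
  exact propext <| and_congr (hocc n le_rfl) <| forall₂_congr fun m hm =>
    not_congr (hocc m hm.le)

theorem lt_hitTime_inter_spellsAt (A : List Bool) (n : ℕ) :
    {ξ | (n : ℕ∞) < hitTime A ξ} ∩ spellsAt A n =
      ⋃ k ∈ (Finset.Icc 1 A.length).filter (fun k => A.take k = A.drop (A.length - k)),
        {ξ | hitTime A ξ = ↑(n + k)} ∩ spellsAt (A.drop k) (n + k) := by
  ext ξ
  simp only [Set.mem_inter_iff, Set.mem_ofPred_eq, Set.mem_iUnion, Finset.mem_filter,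
    Finset.mem_Icc, exists_prop]
  constructor
  · rintro ⟨hlt, hA⟩
    have hocc := occursAt_add_length_iff.2 hA
    obtain ⟨t, ht, hτ⟩ := exists_occursAt_hitTime_eq hocc
    have htn : n < t := by rw [hτ] at hlt; exact_mod_cast hlt
    have htl : t ≤ n + A.length := by exact_mod_cast hτ ▸ hitTime_le_of_occursAt hocc
    obtain ⟨k, rfl⟩ : ∃ k, t = n + k := ⟨t - n, by omega⟩
    rw [spellsAt_eq_inter_take_drop A (k := k) (by omega)] at hA
    refine ⟨k, ⟨⟨by omega, by omega⟩, eq_of_mem_spellsAt hA.1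
      (mem_spellsAt_drop_of_occursAt ht (by omega)) (by simp; omega)⟩, hτ, hA.2⟩
  · rintro ⟨k, ⟨⟨hk1, hkl⟩, hborder⟩, hτ, hdrop⟩
    refine ⟨by rw [hτ]; exact_mod_cast (by omega : n < n + k), ?_⟩
    rw [spellsAt_eq_inter_take_drop A hkl, hborder]
    exact ⟨mem_spellsAt_drop_of_occursAt (occursAt_of_hitTime_eq hτ) hkl, hdrop⟩

end HitTime

def tailProb (μ : Measure (ℕ → Bool)) (A : List Bool) (n : ℕ) : ℝ :=
  μ.real {ξ | (n : ℕ∞) < hitTime A ξ}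

def hitProb (μ : Measure (ℕ → Bool)) (A : List Bool) (n : ℕ) : ℝ :=
  μ.real {ξ | hitTime A ξ = n}

section Probabilities

variable {p : ℝ} {μ : Measure (ℕ → Bool)} {A : List Bool}

lemma tailProb_nonneg (n : ℕ) : 0 ≤ tailProb μ A n := measureReal_nonneg

lemma antitone_tailProb [IsFiniteMeasure μ] : Antitone (tailProb μ A) := fun _ _ hmn =>
  measureReal_mono <| Set.ofPred_subset_ofPred.2 fun _ => lt_of_le_of_lt (by exact_mod_cast hmn)

lemma tailProb_zero [IsProbabilityMeasure μ] (hA : 0 < A.length) : tailProb μ A 0 = 1 := by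
  have : {ξ | ((0 : ℕ) : ℕ∞) < hitTime A ξ} = Set.univ := Set.eq_univ_of_forall fun _ =>
    lt_of_lt_of_le (by exact_mod_cast hA) length_le_hitTime
  rw [tailProb, this, probReal_univ]

lemma hitProb_eq_zero_of_lt_length {n : ℕ} (hn : n < A.length) : hitProb μ A n = 0 := by
  have : {ξ | hitTime A ξ = n} = ∅ := Set.eq_empty_of_forall_notMem fun ξ (h : _ = _) =>
    absurd (h ▸ length_le_hitTime) (by exact_mod_cast hn.not_ge)
  rw [hitProb, this, measureReal_empty]

lemma hitProb_succ [IsFiniteMeasure μ] (n : ℕ) :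
    hitProb μ A (n + 1) = tailProb μ A n - tailProb μ A (n + 1) := by
  have hunion : {ξ | (n : ℕ∞) < hitTime A ξ} =
      {ξ | hitTime A ξ = ↑(n + 1)} ∪ {ξ | ↑(n + 1) < hitTime A ξ} := by
    ext ξ
    rw [Set.mem_union, Set.mem_ofPred_eq, Set.mem_ofPred_eq, Set.mem_ofPred_eq,
      ← ENat.add_one_le_iff (ENat.natCast_ne_top n), Nat.cast_succ, le_iff_eq_or_lt, eq_comm]
  have hdisj : Disjoint {ξ | hitTime A ξ = ↑(n + 1)} {ξ | ↑(n + 1) < hitTime A ξ} :=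
    Set.disjoint_left.2 fun _ (h : _ = _) => by simp [Set.mem_ofPred_eq, h]
  rw [tailProb, hunion, measureReal_union hdisj
    (measurableSet_of_dependsOn (dependsOn_lt_hitTime A (n + 1))), hitProb, tailProb]
  ring

theorem tailProb_mul_strP [IsFiniteMeasure μ] (hμ : IsCoinMeasure p μ) (hp0 : 0 ≤ p)
    (hp1 : p ≤ 1) (n : ℕ) :
    tailProb μ A n * strP p A = ∑ k ∈ Finset.Icc 1 A.length,
      (if A.take k = A.drop (A.length - k) then 1 else 0) * strP p (A.drop k) *
        hitProb μ A (n + k) := by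
  have hdisj : (↑((Finset.Icc 1 A.length).filter fun k => A.take k = A.drop (A.length - k)) :
      Set ℕ).PairwiseDisjoint fun k =>
        {ξ | hitTime A ξ = ↑(n + k)} ∩ spellsAt (A.drop k) (n + k) :=
    fun k _ k' _ hkk' => Set.disjoint_left.2 fun _ h h' =>
      hkk' (Nat.add_left_cancel (by exact_mod_cast h.1.symm.trans h'.1))
  rw [tailProb, ← hμ.measureReal_inter_spellsAt hp0 hp1 (dependsOn_lt_hitTime A n),
    lt_hitTime_inter_spellsAt, measureReal_biUnion_finset hdisj fun k _ =>
      (measurableSet_of_dependsOn (dependsOn_hitTime_eq A _)).inter (measurableSet_spellsAt _ _),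
    Finset.sum_filter]
  refine Finset.sum_congr rfl fun k _ => ?_
  split_ifs
  · rw [hμ.measureReal_inter_spellsAt hp0 hp1 (dependsOn_hitTime_eq A _), hitProb]
    ring
  · ring

theorem tailProb_add_length_le [IsFiniteMeasure μ] (hμ : IsCoinMeasure p μ) (hp0 : 0 ≤ p)
    (hp1 : p ≤ 1) (n : ℕ) :
    tailProb μ A (n + A.length) ≤ (1 - strP p A) * tailProb μ A n := by
  have hsub : {ξ | ↑(n + A.length) < hitTime A ξ} ⊆
      {ξ | (n : ℕ∞) < hitTime A ξ} \ spellsAt A n := fun ξ (h : _ < _) =>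
    ⟨lt_of_le_of_lt (by exact_mod_cast Nat.le_add_right n A.length) h,
      fun hA => lt_hitTime_iff.1 h _ le_rfl (occursAt_add_length_iff.2 hA)⟩
  have hsplit := measureReal_inter_add_sdiff (μ := μ) (s := {ξ | (n : ℕ∞) < hitTime A ξ})
    (measurableSet_spellsAt A n)
  rw [hμ.measureReal_inter_spellsAt hp0 hp1 (dependsOn_lt_hitTime A n)] at hsplit
  calc tailProb μ A (n + A.length)
      ≤ μ.real ({ξ | (n : ℕ∞) < hitTime A ξ} \ spellsAt A n) := measureReal_mono hsub
    _ = (1 - strP p A) * tailProb μ A n := by rw [tailProb]; linarith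

end Probabilities

lemma Antitone.summable_of_le_mul_add {u : ℕ → ℝ} {r : ℝ} {l : ℕ} (hl : 0 < l)
    (hu : Antitone u) (hu0 : ∀ n, 0 ≤ u n) (hr : r < 1) (h : ∀ n, u (n + l) ≤ r * u n) :
    Summable u := by
  have : NeZero l := ⟨hl.ne'⟩
  rw [← summable_indicator_mod_iff hu ((0 : ℕ) : ZMod l), summable_indicator_mod_iff_summable]
  refine summable_of_ratio_norm_eventually_le hr (.of_forall fun m => ?_)
  simpa only [Real.norm_of_nonneg (hu0 _), add_zero, mul_add, mul_one] using h (l * m)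

section GeneratingFunctions

variable {q f : ℕ → ℝ} {s Q : ℝ}

lemma hasSum_pow_of_succ_eq_sub (hQ : HasSum (fun n => q n * s ^ n) Q) (hq0 : q 0 = 1)
    (hf0 : f 0 = 0) (hf : ∀ n, f (n + 1) = q n - q (n + 1)) :
    HasSum (fun n => f n * s ^ n) (1 - (1 - s) * Q) := by
  rw [← hasSum_nat_add_iff' 1]
  have hshift : HasSum (fun n => q (n + 1) * s ^ (n + 1)) (Q - 1) := by
    simpa [hq0] using (hasSum_nat_add_iff' 1).2 hQ
  convert (hQ.mul_left s).sub hshift using 1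
  · funext n; rw [hf]; ring
  · rw [Finset.sum_range_one, hf0]; ring

theorem renewal_generating_function {c : ℕ → ℝ} {P : ℝ} {l : ℕ} (hl : 0 < l)
    (hQ : HasSum (fun n => q n * s ^ n) Q) (hq0 : q 0 = 1)
    (hf : ∀ n, f (n + 1) = q n - q (n + 1)) (hf_lt : ∀ n < l, f n = 0)
    (hren : ∀ n, q n * P = ∑ k ∈ Finset.Icc 1 l, c k * f (n + k)) :
    Q * (P * s ^ l + (1 - s) * ∑ k ∈ Finset.Icc 1 l, c k * s ^ (l - k)) =
      ∑ k ∈ Finset.Icc 1 l, c k * s ^ (l - k) := by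
  set F := 1 - (1 - s) * Q
  have hF : HasSum (fun n => f n * s ^ n) F := hasSum_pow_of_succ_eq_sub hQ hq0 (hf_lt 0 hl) hf
  have hFk : ∀ k ∈ Finset.Icc 1 l,
      HasSum (fun n => c k * s ^ (l - k) * (f (n + k) * s ^ (n + k))) (c k * s ^ (l - k) * F) := by
    intro k hk
    have hshift := (hasSum_nat_add_iff' k).2 hF
    rw [Finset.sum_eq_zero fun i hi => by
      rw [hf_lt i ((Finset.mem_range.1 hi).trans_le (Finset.mem_Icc.1 hk).2), zero_mul],
      sub_zero] at hshift
    exact hshift.mul_left _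
  have hPQ : Q * (P * s ^ l) = (∑ k ∈ Finset.Icc 1 l, c k * s ^ (l - k)) * F := by
    have hterm : ∀ n, q n * s ^ n * (P * s ^ l) = ∑ k ∈ Finset.Icc 1 l,
        c k * s ^ (l - k) * (f (n + k) * s ^ (n + k)) := fun n => by
      rw [show q n * s ^ n * (P * s ^ l) = q n * P * s ^ (n + l) by ring, hren, Finset.sum_mul]
      refine Finset.sum_congr rfl fun k hk => ?_
      rw [show n + l = (n + k) + (l - k) by have := (Finset.mem_Icc.1 hk).2; omega, pow_add]
      ring
    rw [Finset.sum_mul]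
    exact (hQ.mul_right (P * s ^ l)).unique (by simpa only [hterm] using hasSum_sum hFk)
  linear_combination hPQ

end GeneratingFunctions

/-- For every `s ∈ [−1,1]`, the tail generating function
`Q_{τ_A}(s) = Σ_{n≥0} q_n s^n` satisfies
`Q_{τ_A}(s) ⬝ (P(A) s^l + (1−s) Σ_{k=1}^{l} [A_(k)=A^(k)] P(A^(l−k)) s^{l−k})
  = Σ_{k=1}^{l} [A_(k)=A^(k)] P(A^(l−k)) s^{l−k}`.
(Here `Σ_{k=1}^{l} [A_(k)=A^(k)] P(A^(l−k)) s^{l−k} = w_A^A(s) = corrW p A A s`.) -/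
theorem tail_pgf_identity (p : ℝ) (hp0 : 0 < p) (hp1 : p < 1)
    (μ : Measure (ℕ → Bool)) [IsProbabilityMeasure μ] (hμ : IsCoinMeasure p μ)
    (A : List Bool) (hA : 1 ≤ A.length) (s : ℝ) (hs : s ∈ Set.Icc (-1 : ℝ) 1) :
    (∑' n : ℕ, (μ {ξ | (n : ℕ∞) < hitTime A ξ}).toReal * s ^ n) *
        (strP p A * s ^ A.length + (1 - s) * corrW p A A s) =
      corrW p A A s := by
  have hq : Summable (tailProb μ A) :=
    antitone_tailProb.summable_of_le_mul_add hA tailProb_nonneg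
      (by linarith [strP_pos hp0 hp1 A]) (tailProb_add_length_le hμ hp0.le hp1.le)
  have hQ : Summable fun n => tailProb μ A n * s ^ n := hq.of_norm_bounded fun n => by
    rw [norm_mul, norm_pow, Real.norm_of_nonneg (tailProb_nonneg n)]
    exact mul_le_of_le_one_right (tailProb_nonneg n)
      (pow_le_one₀ (norm_nonneg s) (abs_le.2 hs))
  rw [corrW, min_self]
  exact renewal_generating_function hA hQ.hasSum (tailProb_zero hA) hitProb_succ
    (fun _ => hitProb_eq_zero_of_lt_length) (tailProb_mul_strP hμ hp0.le hp1.le)
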